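/- arXiv:1109.4731 — 2 statements merged into one kernel-verified Lean document; each statement's English description precedes it below -/
import Mathlib

section
/- A set B is c-accessing in a graph G if and only if the complement V \ B is not 'oddly dominating into B', i.e. it is NOT the case that some C ⊆ V \ B has Odd(C) ⊇ B. Equivalently: exactly one of the two conditions '∃ D ⊆ B, |D| odd, Odd(D) ⊆ B' and '∃ C ⊆ V \ B, B ⊆ Odd(C)' holds. -/
variable {V : Type*} [Fintype V] [DecidableEq V]

def oddNbhd (G : SimpleGraph V) [DecidableRel G.Adj] (D : Finset V) : Finset V :=
  Finset.univ.filter fun v => Odd (G.neighborFinset v ∩ D).card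

def cAccessing (G : SimpleGraph V) [DecidableRel G.Adj] (B : Finset V) : Prop :=
  ∃ D ⊆ B, Odd D.card ∧ oddNbhd G D ⊆ B

/-!
Identify a finset with its indicator vector over `ZMod 2`, so that `oddNbhd G D` becomes `A *ᵥ 1_D`
for the adjacency matrix `A`. Domination of `B` from `Bᶜ` is then solvability of `(A *ᵥ x) v = 1`
for `v ∈ B` with `x` supported on `Bᶜ`, and a c-accessing `D` is an obstruction to it: a vector `y`
supported on `B` with `y ᵥ* A` vanishing on `Bᶜ` and `y ⬝ᵥ 1 ≠ 0`. By the Fredholm alternative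
(the range of a matrix is the annihilator of its left kernel) exactly one of the two exists.
-/

open Finset Matrix

theorem Matrix.exists_mulVec_eq_iff_forall_vecMul_eq_zero {K m n : Type*} [Field K] [Fintype m]
    [Fintype n] [DecidableEq m] (M : Matrix m n K) (b : m → K) :
    (∃ x, M *ᵥ x = b) ↔ ∀ y, y ᵥ* M = 0 → y ⬝ᵥ b = 0 := by
  refine ⟨fun ⟨x, hx⟩ y hy => by rw [← hx, dotProduct_mulVec, hy, zero_dotProduct], fun h => ?_⟩
  suffices b ∈ LinearMap.range M.mulVecLin from this
  rw [← Subspace.forall_mem_dualAnnihilator_apply_eq_zero_iff]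
  intro φ hφ
  obtain ⟨y, rfl⟩ := (dotProductEquiv K m).surjective φ
  refine h y (dotProduct_eq_zero_iff.mp fun x => ?_)
  rw [← dotProduct_mulVec]
  exact (Submodule.mem_dualAnnihilator _).mp hφ _ ⟨x, rfl⟩

theorem Matrix.exists_supported_mulVec_eq_on_iff {K m n : Type*} [Field K] [Fintype m]
    [Fintype n] [DecidableEq m] [DecidableEq n] (A : Matrix m n K) (S : Finset m)
    (T : Finset n) (b : m → K) :
    (∃ x, (∀ w ∉ T, x w = 0) ∧ ∀ v ∈ S, (A *ᵥ x) v = b v) ↔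
      ∀ y, (∀ v ∉ S, y v = 0) → (∀ w ∈ T, (y ᵥ* A) w = 0) → y ⬝ᵥ b = 0 := by
  -- apply the Fredholm alternative to the block `diagonal pS * A * diagonal pT` of `A`
  set pS : m → K := fun v => if v ∈ S then 1 else 0
  set pT : n → K := fun w => if w ∈ T then 1 else 0
  have hmulVec : ∀ x, (diagonal pS * A * diagonal pT) *ᵥ x = pS * (A *ᵥ (pT * x)) := fun x => by
    rw [← mulVec_mulVec, ← mulVec_mulVec, funext (mulVec_diagonal pS _),
      funext (mulVec_diagonal pT x)]; rfl
  have hvecMul : ∀ y, y ᵥ* (diagonal pS * A * diagonal pT) = ((y * pS) ᵥ* A) * pT := fun y => by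
    rw [← vecMul_vecMul, ← vecMul_vecMul, funext (vecMul_diagonal y pS),
      funext (vecMul_diagonal _ pT)]; rfl
  have hdot : ∀ y, y ⬝ᵥ (pS * b) = (y * pS) ⬝ᵥ b := fun y => by
    simp only [dotProduct, Pi.mul_apply, mul_assoc]
  have hsolution : (∃ x, (∀ w ∉ T, x w = 0) ∧ ∀ v ∈ S, (A *ᵥ x) v = b v) ↔
      ∃ x, (diagonal pS * A * diagonal pT) *ᵥ x = pS * b := by
    simp only [hmulVec]
    constructor
    · rintro ⟨x, hxT, hxS⟩
      have hx : pT * x = x := funext fun w => by by_cases hw : w ∈ T <;> simp [pT, hw, hxT]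
      exact ⟨x, funext fun v => by by_cases hv : v ∈ S <;> simp [pS, hv, hx, hxS]⟩
    · rintro ⟨x, hx⟩
      exact ⟨pT * x, fun w hw => by simp [pT, hw],
        fun v hv => by simpa [pS, hv] using congrFun hx v⟩
  rw [hsolution, exists_mulVec_eq_iff_forall_vecMul_eq_zero]
  simp only [hvecMul, hdot]
  constructor
  · intro h y hyS hyT
    have hy : y * pS = y := funext fun v => by by_cases hv : v ∈ S <;> simp [pS, hv, hyS]
    refine hy ▸ h y (funext fun w => ?_)
    by_cases hw : w ∈ T <;> simp [pT, hw, hy, hyT]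
  · intro h y hy
    refine h (y * pS) (fun v hv => by simp [pS, hv]) fun w hw => ?_
    simpa [pT, hw] using congrFun hy w

theorem zmod_two_eq_zero_iff_ne_one : ∀ a : ZMod 2, a = 0 ↔ a ≠ 1 := by
  decide

theorem Finset.indicator_one_surjective_zmod_two {α : Type*} [Fintype α] :
    Function.Surjective fun s : Finset α => (s : Set α).indicator (1 : α → ZMod 2) := by
  intro x
  refine ⟨({a | x a = 1} : Finset α), funext fun a => ?_⟩
  by_cases h : x a = 1 <;> simp [h, (zmod_two_eq_zero_iff_ne_one _).mpr]

theorem Finset.odd_card_iff_sum_indicator_one {α : Type*} [Fintype α] (s : Finset α) :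
    Odd #s ↔ ∑ a, (s : Set α).indicator (1 : α → ZMod 2) a = 1 := by
  rw [Finset.sum_indicator_subset (1 : α → ZMod 2) (subset_univ s)]
  simp [ZMod.natCast_eq_one_iff_odd]

theorem mem_oddNbhd_iff (G : SimpleGraph V) [DecidableRel G.Adj] (D : Finset V) (v : V) :
    v ∈ oddNbhd G D ↔ (G.adjMatrix (ZMod 2) *ᵥ (D : Set V).indicator 1) v = 1 := by
  rw [SimpleGraph.adjMatrix_mulVec_apply, Finset.sum_indicator_eq_sum_inter]
  simp [oddNbhd, ZMod.natCast_eq_one_iff_odd]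

theorem exists_subset_subset_oddNbhd_iff (G : SimpleGraph V) [DecidableRel G.Adj]
    (S T : Finset V) :
    (∃ C ⊆ T, S ⊆ oddNbhd G C) ↔
      ∃ x : V → ZMod 2, (∀ w ∉ T, x w = 0) ∧ ∀ v ∈ S, (G.adjMatrix (ZMod 2) *ᵥ x) v = 1 := by
  rw [Finset.indicator_one_surjective_zmod_two.exists]
  simp only [Set.indicator_eq_zero_iff_notMem, mem_coe, ← mem_oddNbhd_iff, subset_iff,
    not_imp_not]

theorem not_cAccessing_iff (G : SimpleGraph V) [DecidableRel G.Adj] (B : Finset V) :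
    ¬cAccessing G B ↔ ∀ y : V → ZMod 2, (∀ v ∉ B, y v = 0) →
      (∀ w ∈ Bᶜ, (y ᵥ* G.adjMatrix (ZMod 2)) w = 0) → y ⬝ᵥ 1 = 0 := by
  rw [Finset.indicator_one_surjective_zmod_two.forall]
  simp only [cAccessing, not_exists, not_and, dotProduct_one, ← mulVec_transpose,
    SimpleGraph.transpose_adjMatrix, zmod_two_eq_zero_iff_ne_one, ne_eq,
    Set.indicator_eq_zero_iff_notMem, mem_coe, ← mem_oddNbhd_iff,
    ← Finset.odd_card_iff_sum_indicator_one, subset_iff, mem_compl, not_imp_not]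
  exact forall_congr' fun D => by tauto

theorem cAccessing_xor_dominated (G : SimpleGraph V) [DecidableRel G.Adj] (B : Finset V) :
    Xor' (cAccessing G B) (∃ C ⊆ Bᶜ, B ⊆ oddNbhd G C) := by
  refine xor_iff_not_iff'.mpr ?_
  rw [not_cAccessing_iff, exists_subset_subset_oddNbhd_iff]
  exact (Matrix.exists_supported_mulVec_eq_on_iff _ B Bᶜ 1).symm
end

section
/- Let G be a finite simple graph. A set B is c-accessing in both G and its complement graph Ḡ if and only if B is c-accessing in G and the complement set V \ B is not c-accessing in G. -/
variable {V : Type*} [Fintype V] [DecidableEq V]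

/-!
Over `𝔽₂` a set `D` is its indicator vector `x`, `|D|` is odd iff `∑ x = 1`, and `Odd_G(D)` is the
support of `A x`, where `A` is the adjacency matrix of `G`; the adjacency matrix of `Gᶜ` is
`J - I - A`. Hence `B` is c-accessing in `Gᶜ` iff some `x` supported on `B` with `∑ x = 1` has
`A x = 1` off `B`, and `Bᶜ` is c-accessing in `G` iff some `y` supported off `B` with `∑ y = 1`
has `A y = 0` on `B`. Since `A` is symmetric, the transpose of the block `A_{Bᶜ,B}` is `A_{B,Bᶜ}`,
so by the Fredholm alternative `A_{Bᶜ,B} x = 1` is solvable iff every `y` in the kernel of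
`A_{B,Bᶜ}` has `∑ y = 0`. A witness that `B` is c-accessing in `G` has `∑ = 1` and `A = 0` off `B`,
so adding it to a solution `x` if needed also gives `∑ x = 1`.
-/

open Matrix

namespace Matrix

variable {K m n : Type*} [Field K] [Fintype m] [Fintype n] [DecidableEq m]

theorem mem_range_mulVecLin_iff (M : Matrix m n K) (b : m → K) :
    b ∈ LinearMap.range M.mulVecLin ↔ ∀ y, y ᵥ* M = 0 → y ⬝ᵥ b = 0 := by
  rw [← Subspace.forall_mem_dualAnnihilator_apply_eq_zero_iff,
    (dotProductEquiv K m).surjective.forall]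
  refine forall_congr' fun y => imp_congr_left ?_
  simp only [Submodule.mem_dualAnnihilator, LinearMap.mem_range, forall_exists_index,
    forall_apply_eq_imp_iff, mulVecLin_apply, dotProductEquiv_apply_apply, dotProduct_mulVec,
    dotProduct_eq_zero_iff]

theorem exists_mulVec_eq_on_iff (A : Matrix m m K) (S T : Finset m) (c : m → K) :
    (∃ x, (∀ i ∉ S, x i = 0) ∧ ∀ i ∈ T, (A *ᵥ x) i = c i) ↔
      ∀ y, (∀ i ∉ T, y i = 0) → (∀ i ∈ S, (y ᵥ* A) i = 0) → y ⬝ᵥ c = 0 := by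
  let P (s : Finset m) : Matrix m m K := diagonal fun i => if i ∈ s then 1 else 0
  have mulVec_P (s : Finset m) (x : m → K) : P s *ᵥ x = fun i => if i ∈ s then x i else 0 := by
    ext i; simp [P, mulVec_diagonal]
  have vecMul_P (s : Finset m) (x : m → K) : x ᵥ* P s = fun i => if i ∈ s then x i else 0 := by
    ext i; simp [P, vecMul_diagonal]
  have restrict_eq_self {s : Finset m} {x : m → K} (hx : ∀ i ∉ s, x i = 0) :
      (fun i => if i ∈ s then x i else 0) = x :=
    funext fun i => by by_cases hi : i ∈ s <;> simp [hi, hx]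
  have range_iff : (∃ x, (∀ i ∉ S, x i = 0) ∧ ∀ i ∈ T, (A *ᵥ x) i = c i) ↔
      P T *ᵥ c ∈ LinearMap.range (P T * A * P S).mulVecLin := by
    simp only [LinearMap.mem_range, mulVecLin_apply, ← mulVec_mulVec, mulVec_P]
    constructor
    · rintro ⟨x, hxS, hxT⟩
      refine ⟨x, funext fun i => ?_⟩
      simp only [restrict_eq_self hxS]
      split_ifs with hi
      exacts [hxT i hi, rfl]
    · rintro ⟨x, hx⟩
      refine ⟨fun i => if i ∈ S then x i else 0, fun i hi => if_neg hi, fun i hi => ?_⟩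
      simpa [hi] using congrFun hx i
  rw [range_iff, mem_range_mulVecLin_iff]
  simp only [← vecMul_vecMul, dotProduct_mulVec, vecMul_P]
  refine ⟨fun h y hyT hyS => ?_, fun h y hy => ?_⟩
  · rw [← restrict_eq_self hyT]
    refine h y (funext fun i => ?_)
    simp only [restrict_eq_self hyT]
    split_ifs with hi
    exacts [hyS i hi, rfl]
  · refine h _ (fun i hi => if_neg hi) (fun i hi => ?_)
    simpa [hi] using congrFun hy i

theorem IsSymm.exists_mulVec_eq_one_iff {A : Matrix m m K} (hA : A.IsSymm) (S : Finset m)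
    (hS : ∃ x₀, (∀ i ∉ S, x₀ i = 0) ∧ ∑ i, x₀ i = 1 ∧ ∀ i ∉ S, (A *ᵥ x₀) i = 0) :
    (∃ x, (∀ i ∉ S, x i = 0) ∧ ∑ i, x i = 1 ∧ ∀ i ∉ S, (A *ᵥ x) i = 1) ↔
      ¬∃ y, (∀ i ∈ S, y i = 0) ∧ ∑ i, y i = 1 ∧ ∀ i ∈ S, (A *ᵥ y) i = 0 := by
  obtain ⟨x₀, hx₀S, hx₀sum, hx₀A⟩ := hS
  calc (∃ x, (∀ i ∉ S, x i = 0) ∧ ∑ i, x i = 1 ∧ ∀ i ∉ S, (A *ᵥ x) i = 1)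
      ↔ ∃ x, (∀ i ∉ S, x i = 0) ∧ ∀ i ∈ Sᶜ, (A *ᵥ x) i = (1 : m → K) i := by
        simp only [Finset.mem_compl, Pi.one_apply]
        refine ⟨fun ⟨x, hxS, _, hxA⟩ => ⟨x, hxS, hxA⟩, fun ⟨x, hxS, hxA⟩ => ?_⟩
        refine ⟨x + (1 - ∑ i, x i) • x₀, fun i hi => ?_, ?_, fun i hi => ?_⟩
        · simp [hxS i hi, hx₀S i hi]
        · simp [Finset.sum_add_distrib, ← Finset.mul_sum, hx₀sum]
        · simp [mulVec_add, mulVec_smul, hxA i hi, hx₀A i hi]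
    _ ↔ ∀ y, (∀ i ∉ Sᶜ, y i = 0) → (∀ i ∈ S, (y ᵥ* A) i = 0) → y ⬝ᵥ 1 = 0 :=
        exists_mulVec_eq_on_iff A S Sᶜ 1
    _ ↔ ¬∃ y, (∀ i ∈ S, y i = 0) ∧ ∑ i, y i = 1 ∧ ∀ i ∈ S, (A *ᵥ y) i = 0 := by
        simp only [Finset.mem_compl, not_not, dotProduct_one, ← mulVec_transpose, hA.eq]
        refine ⟨fun h ⟨y, hyS, hysum, hyA⟩ => one_ne_zero (hysum ▸ h y hyS hyA),
          fun h y hyS hyA => by_contra fun hsum => h ⟨(∑ i, y i)⁻¹ • y, ?_, ?_, ?_⟩⟩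
        · intro i hi; simp [hyS i hi]
        · simp [← Finset.mul_sum, inv_mul_cancel₀ hsum]
        · intro i hi; simp [mulVec_smul, hyA i hi]

end Matrix

def charVec (D : Finset V) : V → ZMod 2 := fun v => if v ∈ D then 1 else 0

theorem charVec_surjective : Function.Surjective (charVec (V := V)) := by
  intro x
  refine ⟨Finset.univ.filter (x · ≠ 0), funext fun v => ?_⟩
  have ne_zero_iff_eq_one : ∀ a : ZMod 2, a ≠ 0 → a = 1 := by decide
  by_cases hv : x v = 0 <;> simp [charVec, hv, ne_zero_iff_eq_one]

theorem sum_charVec (D : Finset V) : ∑ v, charVec D v = D.card := by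
  simp [charVec]

namespace SimpleGraph

variable (G : SimpleGraph V) [DecidableRel G.Adj]

theorem adjMatrix_compl_mulVec_apply {α : Type*} [Ring α] (x : V → α) (v : V) :
    (Gᶜ.adjMatrix α *ᵥ x) v = ∑ u, x u - x v - (G.adjMatrix α *ᵥ x) v := by
  rw [adjMatrix_mulVec_apply, adjMatrix_mulVec_apply, neighborFinset_compl,
    Finset.sum_sdiff_eq_sub (by simp), Finset.sum_singleton,
    ← Finset.sum_compl_add_sum (G.neighborFinset v)]
  abel

theorem adjMatrix_mulVec_charVec_apply (D : Finset V) (v : V) :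
    (G.adjMatrix (ZMod 2) *ᵥ charVec D) v = (G.neighborFinset v ∩ D).card := by
  simp [adjMatrix_mulVec_apply, charVec]

end SimpleGraph

section

variable (G : SimpleGraph V) [DecidableRel G.Adj]

theorem cAccessing_iff_exists_vector (B : Finset V) :
    cAccessing G B ↔ ∃ x : V → ZMod 2,
      (∀ v ∉ B, x v = 0) ∧ ∑ v, x v = 1 ∧ ∀ v ∉ B, (G.adjMatrix (ZMod 2) *ᵥ x) v = 0 := by
  rw [cAccessing, charVec_surjective.exists]
  refine exists_congr fun D => and_congr (by simp [charVec, Finset.subset_iff, not_imp_not]) <|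
    and_congr (by rw [sum_charVec, ZMod.natCast_eq_one_iff_odd]) ?_
  simp only [Finset.subset_iff, oddNbhd, Finset.mem_filter, Finset.mem_univ, true_and,
    G.adjMatrix_mulVec_charVec_apply, ZMod.natCast_eq_zero_iff_even, ← Nat.not_odd_iff_even]
  exact forall_congr' fun _ => not_imp_not.symm

theorem cAccessing_compl_graph_iff_exists_vector (B : Finset V) :
    cAccessing Gᶜ B ↔ ∃ x : V → ZMod 2,
      (∀ v ∉ B, x v = 0) ∧ ∑ v, x v = 1 ∧ ∀ v ∉ B, (G.adjMatrix (ZMod 2) *ᵥ x) v = 1 := by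
  rw [cAccessing_iff_exists_vector]
  refine exists_congr fun x => and_congr_right fun hx => and_congr_right fun hsum =>
    forall₂_congr fun v hv => ?_
  rw [G.adjMatrix_compl_mulVec_apply, hsum, hx v hv, sub_zero, sub_eq_zero, eq_comm]

end

theorem cAccessing_compl_graph_iff (G : SimpleGraph V) [DecidableRel G.Adj] (B : Finset V) :
    (cAccessing G B ∧ cAccessing Gᶜ B) ↔ (cAccessing G B ∧ ¬ cAccessing G Bᶜ) := by
  refine and_congr_right fun hB => ?_
  rw [cAccessing_compl_graph_iff_exists_vector, cAccessing_iff_exists_vector G Bᶜ]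
  simp only [Finset.mem_compl, not_not]
  exact (G.isSymm_adjMatrix (α := ZMod 2)).exists_mulVec_eq_one_iff B
    ((cAccessing_iff_exists_vector G B).mp hB)
end
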